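/- Let {v₁, v₂, v₃} be a ℤ-basis of ℤ³ such that for all 1 ≤ i ≠ j ≤ 3 one has ‖v_i + v_j‖ ≥ max{‖v_i‖, ‖v_j‖} and ‖v_i − v_j‖ ≥ max{‖v_i‖, ‖v_j‖} (equivalently, |⟨v_i, v_j⟩| ≤ (1/2)·min{‖v_i‖², ‖v_j‖²}). Then each v_i belongs to {±e₁, ±e₂, ±e₃}, where e₁, e₂, e₃ is the standard basis of ℤ³. (Norm-inequality form of the Main Theorem, as established in its proof.) -/

import Mathlib

/-- The Euclidean norm of an integer vector in `ℤ³`, regarded as a vector in `ℝ³`. -/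
noncomputable def enorm3 (v : Fin 3 → ℤ) : ℝ :=
  Real.sqrt (∑ i, ((v i : ℝ)) ^ 2)

/-- `{v₁, v₂, v₃}` is a `ℤ`-basis of `ℤ³`: the matrix with columns `v₁, v₂, v₃` has
determinant `±1`. -/
def IsZBasis (v₁ v₂ v₃ : Fin 3 → ℤ) : Prop :=
  (Matrix.of fun i j => ![v₁, v₂, v₃] j i).det = 1 ∨
    (Matrix.of fun i j => ![v₁, v₂, v₃] j i).det = -1


/-!
The Gram matrix `G` of the basis is a symmetric integer matrix with `det G = (det V)² = 1`, and
the norm inequalities say exactly `|2 gᵢⱼ| ≤ min gᵢᵢ gⱼⱼ`. Order the diagonal as `a ≤ b ≤ c` with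
off-diagonal entries `p, q, r`. The identity `a · det G = (ab - p²)(ac - q²) - (ar - pq)²` gives
`4 det G ≥ a ((c - b)(4b - a) + 3b(b - a))`, which forces `a = b = c`, except for the diagonal
`(1, 1, 2)` where `p = q = r = 0` and `det G = 2`. Then `det G` is even when `a`
is, and for `a = 2s + 1` (so `|p|, |q|, |r| ≤ s`) the same identity gives `det G ≥ (a + s)²`; hence
`a = 1`. Finally an integer vector of squared length `1` is `±eₖ`.
-/

open Matrix

section SymmetricDet

variable {R : Type*} [CommRing R] (a b c p q r : R)

theorem det_symm_fin_three :
    !![a, p, q; p, b, r; q, r, c].det = a*b*c + 2*p*q*r - a*r^2 - b*q^2 - c*p^2 := by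
  rw [det_fin_three]
  simp only [of_apply, cons_val', cons_val_zero, cons_val_one, cons_val_two, empty_val',
    cons_val_fin_one, head_cons, tail_cons, head_fin_const]
  ring

theorem mul_det_symm_fin_three :
    a * !![a, p, q; p, b, r; q, r, c].det = (a*b - p^2) * (a*c - q^2) - (a*r - p*q)^2 := by
  rw [det_symm_fin_three]; ring

variable {a b c p q r} [LinearOrder R] [IsStrictOrderedRing R]

theorem det_symm_fin_three_lower_bound (ha : 0 < a) (hab : a ≤ b) (hbc : b ≤ c)
    (hp : |2*p| ≤ a) (hq : |2*q| ≤ a) (hr : |2*r| ≤ b) :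
    a * ((c - b) * (4*b - a) + 3*b*(b - a)) ≤ 4 * !![a, p, q; p, b, r; q, r, c].det := by
  have hp2 : 4*p^2 ≤ a^2 := by linear_combination sq_le_sq' (abs_le.mp hp).1 (abs_le.mp hp).2
  have hq2 : 4*q^2 ≤ a^2 := by linear_combination sq_le_sq' (abs_le.mp hq).1 (abs_le.mp hq).2
  have hcross : |4*(a*r - p*q)| ≤ 2*a*b + a^2 := by
    have hpq : |4*(p*q)| ≤ a^2 := by
      rw [show 4*(p*q) = (2*p)*(2*q) by ring, abs_mul, sq]
      exact mul_le_mul hp hq (abs_nonneg _) ha.le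
    have har : |4*(a*r)| ≤ 2*a*b := by
      rw [show 4*(a*r) = 2*a*(2*r) by ring, abs_mul, abs_of_pos (by positivity : 0 < 2*a)]
      exact mul_le_mul_of_nonneg_left hr (by positivity)
    calc |4*(a*r - p*q)| = |4*(a*r) - 4*(p*q)| := by ring_nf
      _ ≤ |4*(a*r)| + |4*(p*q)| := abs_sub _ _
      _ ≤ 2*a*b + a^2 := add_le_add har hpq
  have hab' : a^2 ≤ a*b := by rw [sq]; exact mul_le_mul_of_nonneg_left hab ha.le
  have hac' : a^2 ≤ a*c := by rw [sq]; exact mul_le_mul_of_nonneg_left (hab.trans hbc) ha.le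
  -- bound the 2×2 minors below and the cross minor above in `mul_det_symm_fin_three`
  have hminors : (4*a*b - a^2) * (4*a*c - a^2) ≤ (4*(a*b - p^2)) * (4*(a*c - q^2)) :=
    mul_le_mul (by linarith) (by linarith) (by linarith [sq_nonneg a]) (by linarith [sq_nonneg a])
  have hcross2 : (4*(a*r - p*q))^2 ≤ (2*a*b + a^2)^2 :=
    sq_le_sq' (abs_le.mp hcross).1 (abs_le.mp hcross).2
  have key : a * (4 * (a * ((c - b) * (4*b - a) + 3*b*(b - a))))
      ≤ a * (4 * (4 * !![a, p, q; p, b, r; q, r, c].det)) := by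
    linarith [mul_det_symm_fin_three a b c p q r]
  linarith [le_of_mul_le_mul_left key ha]

theorem det_symm_fin_three_lower_bound_of_diag_eq (ha : 0 < a) {m : R} (hm : 2*m ≤ a)
    (hp : |p| ≤ m) (hq : |q| ≤ m) (hr : |r| ≤ m) :
    (a - 2*m) * (a + m)^2 ≤ !![a, p, q; p, a, r; q, r, a].det := by
  have hm0 : 0 ≤ m := (abs_nonneg _).trans hp
  have hp2 : p^2 ≤ m^2 := sq_le_sq' (abs_le.mp hp).1 (abs_le.mp hp).2
  have hq2 : q^2 ≤ m^2 := sq_le_sq' (abs_le.mp hq).1 (abs_le.mp hq).2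
  have hcross : |a*r - p*q| ≤ a*m + m^2 := by
    calc |a*r - p*q| ≤ |a*r| + |p*q| := abs_sub _ _
      _ = a * |r| + |p| * |q| := by rw [abs_mul, abs_mul, abs_of_pos ha]
      _ ≤ a*m + m*m := add_le_add (mul_le_mul_of_nonneg_left hr ha.le)
          (mul_le_mul hp hq (abs_nonneg _) hm0)
      _ = a*m + m^2 := by ring
  have hcross2 : (a*r - p*q)^2 ≤ (a*m + m^2)^2 :=
    sq_le_sq' (abs_le.mp hcross).1 (abs_le.mp hcross).2
  have hma : m^2 ≤ a^2 := pow_le_pow_left₀ hm0 (by linarith) 2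
  have hminors : (a^2 - m^2) * (a^2 - m^2) ≤ (a*a - p^2) * (a*a - q^2) :=
    mul_le_mul (by linarith) (by linarith) (by linarith) (by linarith)
  have key : a * ((a - 2*m) * (a + m)^2) ≤ a * !![a, p, q; p, a, r; q, r, a].det := by
    linarith [mul_det_symm_fin_three a a a p q r]
  exact le_of_mul_le_mul_left key ha

end SymmetricDet

theorem Int.eq_one_of_det_symm_fin_three_eq_one {a b c p q r : ℤ} (hab : a ≤ b) (hbc : b ≤ c)
    (hp : |2*p| ≤ a) (hq : |2*q| ≤ a) (hr : |2*r| ≤ b)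
    (hdet : !![a, p, q; p, b, r; q, r, c].det = 1) :
    a = 1 ∧ b = 1 ∧ c = 1 := by
  have ha : 0 < a := by
    by_contra! ha
    rw [abs_le] at hp hq
    obtain ⟨ha0, hp0, hq0⟩ : a = 0 ∧ p = 0 ∧ q = 0 := by omega
    simp [det_symm_fin_three, ha0, hp0, hq0] at hdet
  have hbound := det_symm_fin_three_lower_bound ha hab hbc hp hq hr
  rw [hdet] at hbound
  have hba : b = a := by
    by_contra hba
    have h1 : 0 ≤ a * ((c - b) * (4*b - a)) := by
      apply mul_nonneg ha.le; apply mul_nonneg <;> linarith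
    have hgap : 1 ≤ b - a := by omega
    have h2 : 2 * (b - a) ≤ a * b * (b - a) :=
      mul_le_mul_of_nonneg_right ((by omega : 2 ≤ b).trans (le_mul_of_one_le_left (by omega) ha))
        (by omega)
    linarith
  subst hba
  have hca : c = b := by
    by_contra hca
    have hb1 : b = 1 := by
      have : b * b * 3 ≤ b * b * (3 * (c - b)) :=
        mul_le_mul_of_nonneg_left (by omega) (by positivity)
      nlinarith
    subst hb1
    have hp0 : p = 0 := by rw [abs_le] at hp; omega
    have hq0 : q = 0 := by rw [abs_le] at hq; omega
    have hr0 : r = 0 := by rw [abs_le] at hr; omega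
    simp [det_symm_fin_three, hp0, hq0, hr0] at hdet
    omega
  subst hca
  obtain ⟨s, hs⟩ | ⟨s, hs⟩ := Int.even_or_odd c
  · -- the determinant of a matrix with even diagonal is even
    have : (2 : ℤ) ∣ 1 := ⟨s * (c^2 - p^2 - q^2 - r^2) + p*q*r, by
      rw [← hdet, det_symm_fin_three, hs]; ring⟩
    omega
  · have hm := det_symm_fin_three_lower_bound_of_diag_eq (a := c) (p := p) (q := q) (r := r)
      (m := s) ha (by omega)
      (by rw [abs_le] at hp ⊢; omega) (by rw [abs_le] at hq ⊢; omega) (by rw [abs_le] at hr ⊢; omega)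
    rw [hdet, hs] at hm
    have : s = 0 := by nlinarith
    omega

theorem Matrix.diag_eq_one_of_reduced_of_det_eq_one {G : Matrix (Fin 3) (Fin 3) ℤ} (hG : G.IsSymm)
    (hred : ∀ i j, i ≠ j → |2 * G i j| ≤ G i i) (hdet : G.det = 1) (i : Fin 3) : G i i = 1 := by
  set σ := Tuple.sort G.diag
  have hmono : Monotone (G.diag ∘ σ) := Tuple.monotone_sort _
  set H := G.submatrix σ σ
  have hHsymm : ∀ i j, H j i = H i j := (hG.submatrix σ).apply
  have hHred : ∀ i j, i ≠ j → |2 * H i j| ≤ H i i := fun i j hij => hred _ _ (σ.injective.ne hij)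
  have hHeta : H = !![H 0 0, H 0 1, H 0 2; H 0 1, H 1 1, H 1 2; H 0 2, H 1 2, H 2 2] :=
    Matrix.ext fun i j => by fin_cases i <;> fin_cases j <;> first | rfl | exact hHsymm _ _
  have hHdet : H.det = 1 := by rw [det_submatrix_equiv_self, hdet]
  obtain ⟨h0, h1, h2⟩ := Int.eq_one_of_det_symm_fin_three_eq_one
    (hmono (by decide : (0 : Fin 3) ≤ 1)) (hmono (by decide : (1 : Fin 3) ≤ 2))
    (hHred 0 1 (by decide)) (hHred 0 2 (by decide)) (hHred 1 2 (by decide)) (hHeta ▸ hHdet)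
  obtain ⟨k, rfl⟩ := σ.surjective i
  fin_cases k
  exacts [h0, h1, h2]

theorem abs_two_mul_dotProduct_le {ι R : Type*} [Fintype ι] [CommRing R] [LinearOrder R]
    [IsStrictOrderedRing R] {u w : ι → R} (hadd : w ⬝ᵥ w ≤ (u + w) ⬝ᵥ (u + w))
    (hsub : w ⬝ᵥ w ≤ (u - w) ⬝ᵥ (u - w)) : |2 * (u ⬝ᵥ w)| ≤ u ⬝ᵥ u := by
  simp only [add_dotProduct, dotProduct_add, sub_dotProduct, dotProduct_sub,
    dotProduct_comm w u] at hadd hsub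
  exact abs_le.mpr ⟨by linarith, by linarith⟩

theorem exists_eq_single_or_neg_of_dotProduct_self_eq_one {ι : Type*} [Fintype ι] [DecidableEq ι]
    {v : ι → ℤ} (hv : v ⬝ᵥ v = 1) : ∃ k, v = Pi.single k 1 ∨ v = -Pi.single k 1 := by
  obtain ⟨k, hk⟩ : ∃ k, v k ≠ 0 := by
    by_contra! h
    simp [funext h] at hv
  have hsplit := Finset.add_sum_erase Finset.univ (fun i => v i * v i) (Finset.mem_univ k)
  rw [← dotProduct, hv] at hsplit
  have hk1 : 0 < v k * v k := mul_self_pos.mpr hk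
  have hrest_nonneg : 0 ≤ ∑ i ∈ Finset.univ.erase k, v i * v i :=
    Finset.sum_nonneg fun i _ => mul_self_nonneg (v i)
  have hrest : ∀ i ≠ k, v i = 0 := by
    have := (Finset.sum_eq_zero_iff_of_nonneg fun i _ => mul_self_nonneg (v i)).mp
      (by omega : ∑ i ∈ Finset.univ.erase k, v i * v i = 0)
    exact fun i hi => mul_self_eq_zero.mp (this i (Finset.mem_erase.mpr ⟨hi, Finset.mem_univ i⟩))
  refine ⟨k, (mul_self_eq_one_iff.mp (by omega : v k * v k = 1)).imp (fun h => ?_) (fun h => ?_)⟩ <;>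
  · ext i
    by_cases hi : i = k
    · subst hi; simp [h]
    · simp [hi, hrest i hi]

theorem enorm3_le_enorm3_iff {u w : Fin 3 → ℤ} : enorm3 u ≤ enorm3 w ↔ u ⬝ᵥ u ≤ w ⬝ᵥ w := by
  have hcast : ∀ v : Fin 3 → ℤ, ∑ i, ((v i : ℝ)) ^ 2 = ((v ⬝ᵥ v : ℤ) : ℝ) := by
    simp [dotProduct, sq]
  rw [enorm3, enorm3, Real.sqrt_le_sqrt_iff (by positivity), hcast, hcast, Int.cast_le]

/-- Norm-inequality form of the Main Theorem: if `{v₁, v₂, v₃}` is a `ℤ`-basis of `ℤ³`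
with `‖vᵢ ± vⱼ‖ ≥ max ‖vᵢ‖ ‖vⱼ‖` for all `i ≠ j`, then each `vᵢ ∈ {±e₁, ±e₂, ±e₃}`. -/
theorem mainTheoremNormForm (v₁ v₂ v₃ : Fin 3 → ℤ) (hb : IsZBasis v₁ v₂ v₃)
    (h : ∀ i j : Fin 3, i ≠ j →
      enorm3 (![v₁, v₂, v₃] i + ![v₁, v₂, v₃] j)
          ≥ max (enorm3 (![v₁, v₂, v₃] i)) (enorm3 (![v₁, v₂, v₃] j)) ∧
        enorm3 (![v₁, v₂, v₃] i - ![v₁, v₂, v₃] j)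
          ≥ max (enorm3 (![v₁, v₂, v₃] i)) (enorm3 (![v₁, v₂, v₃] j))) :
    ∀ i : Fin 3, ∃ k : Fin 3,
      ![v₁, v₂, v₃] i = Pi.single k 1 ∨ ![v₁, v₂, v₃] i = -Pi.single k 1 := by
  set V := ![v₁, v₂, v₃]
  have hdetV : (of V).det = 1 ∨ (of V).det = -1 := by
    rw [← det_transpose]; exact hb
  have hdet : (of V * (of V)ᵀ).det = 1 := by
    rw [det_mul, det_transpose]
    rcases hdetV with hd | hd <;> simp [hd]
  have hred (i j : Fin 3) (hij : i ≠ j) : |2 * (of V * (of V)ᵀ) i j| ≤ (of V * (of V)ᵀ) i i :=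
    abs_two_mul_dotProduct_le (enorm3_le_enorm3_iff.mp ((le_max_right _ _).trans (h i j hij).1))
      (enorm3_le_enorm3_iff.mp ((le_max_right _ _).trans (h i j hij).2))
  exact fun i => exists_eq_single_or_neg_of_dotProduct_self_eq_one
    (diag_eq_one_of_reduced_of_det_eq_one (isSymm_mul_transpose_self _) hred hdet i)
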